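/- arXiv:2409.02730 — 3 statements merged into one kernel-verified Lean document; each statement's English description precedes it below -/
import Mathlib

section
/- Let S and S' be two distinct finite subsets of ℝ^3, each with at most n elements. Then there exists a polynomial P : ℝ^3 → ℝ of degree at most 2n such that the sum of P(r) over r in S differs from the sum of P(r') over r' in S'. -/
/-!
If `S ⊄ S'`, the product over `y ∈ S'` of the squared distances `‖r - y‖²` is a polynomial of
degree `2 #S'` that vanishes on `S'` and is nonnegative everywhere, and strictly positive at a
point of `S \ S'`; so its sum over `S` is positive while its sum over `S'` is zero.
-/

open MvPolynomial Finset

section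

variable {σ R : Type*} [Fintype σ] [CommRing R]

noncomputable def sqDistPoly (y : σ → R) : MvPolynomial σ R :=
  ∑ i, (X i - C (y i)) ^ 2

theorem eval_sqDistPoly (x y : σ → R) : eval x (sqDistPoly y) = ∑ i, (x i - y i) ^ 2 := by
  simp [sqDistPoly]

theorem totalDegree_sqDistPoly_le (y : σ → R) : (sqDistPoly y).totalDegree ≤ 2 := by
  refine (totalDegree_finsetSum _ _).trans (Finset.sup_le fun i _ => ?_)
  have hlin : (X i - C (y i) : MvPolynomial σ R).totalDegree ≤ 1 :=
    (totalDegree_sub _ _).trans (max_le (isHomogeneous_X R i).totalDegree_le (by simp))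
  exact (totalDegree_pow _ _).trans (by omega)

noncomputable def vanishingPoly (T : Finset (σ → R)) : MvPolynomial σ R :=
  ∏ y ∈ T, sqDistPoly y

theorem totalDegree_vanishingPoly_le (T : Finset (σ → R)) :
    (vanishingPoly T).totalDegree ≤ 2 * #T :=
  calc (vanishingPoly T).totalDegree ≤ ∑ y ∈ T, (sqDistPoly y).totalDegree :=
        totalDegree_finsetProd _ _
    _ ≤ ∑ _y ∈ T, 2 := sum_le_sum fun y _ => totalDegree_sqDistPoly_le y
    _ = 2 * #T := by rw [sum_const, smul_eq_mul, mul_comm]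

theorem eval_vanishingPoly_of_mem {T : Finset (σ → R)} {x : σ → R} (hx : x ∈ T) :
    eval x (vanishingPoly T) = 0 := by
  rw [vanishingPoly, map_prod]
  exact prod_eq_zero hx (by simp [eval_sqDistPoly])

variable [LinearOrder R] [IsStrictOrderedRing R]

theorem eval_sqDistPoly_pos {x y : σ → R} (hxy : x ≠ y) : 0 < eval x (sqDistPoly y) := by
  obtain ⟨i, hi⟩ := Function.ne_iff.mp hxy
  rw [eval_sqDistPoly]
  exact sum_pos' (fun j _ => sq_nonneg _) ⟨i, mem_univ i, sq_pos_of_ne_zero (sub_ne_zero.mpr hi)⟩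

theorem eval_vanishingPoly_nonneg (T : Finset (σ → R)) (x : σ → R) :
    0 ≤ eval x (vanishingPoly T) := by
  rw [vanishingPoly, map_prod]
  exact prod_nonneg fun y _ => by
    rw [eval_sqDistPoly]
    exact sum_nonneg fun i _ => sq_nonneg _

theorem eval_vanishingPoly_pos {T : Finset (σ → R)} {x : σ → R} (hx : x ∉ T) :
    0 < eval x (vanishingPoly T) := by
  rw [vanishingPoly, map_prod]
  exact prod_pos fun y hy => eval_sqDistPoly_pos (ne_of_mem_of_not_mem hy hx).symm

theorem sum_eval_vanishingPoly_ne_of_not_subset {S T : Finset (σ → R)} (hST : ¬S ⊆ T) :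
    ∑ r ∈ S, eval r (vanishingPoly T) ≠ ∑ r ∈ T, eval r (vanishingPoly T) := by
  obtain ⟨x, hxS, hxT⟩ := not_subset.mp hST
  rw [sum_eq_zero fun r hr => eval_vanishingPoly_of_mem hr]
  exact (sum_pos' (fun r _ => eval_vanishingPoly_nonneg T r)
    ⟨x, hxS, eval_vanishingPoly_pos hxT⟩).ne'

end

/-- Two distinct finite subsets of `ℝ³`, each with at most `n` elements, can be
distinguished by a fundamental feature given by a polynomial of degree at most `2n`:
there is `P` with `∑_{r ∈ S} P(r) ≠ ∑_{r' ∈ S'} P(r')`. -/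
theorem fundamental_features_determine_sets (n : ℕ) (S S' : Finset (Fin 3 → ℝ))
    (hS : S.card ≤ n) (hS' : S'.card ≤ n) (hne : S ≠ S') :
    ∃ P : MvPolynomial (Fin 3) ℝ, P.totalDegree ≤ 2 * n ∧
      ∑ r ∈ S, MvPolynomial.eval r P ≠ ∑ r' ∈ S', MvPolynomial.eval r' P := by
  by_cases hsub : S ⊆ S'
  · have hsub' : ¬S' ⊆ S := fun h => hne (hsub.antisymm h)
    exact ⟨vanishingPoly S, (totalDegree_vanishingPoly_le S).trans (by omega),
      (sum_eval_vanishingPoly_ne_of_not_subset hsub').symm⟩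
  · exact ⟨vanishingPoly S', (totalDegree_vanishingPoly_le S').trans (by omega),
      sum_eval_vanishingPoly_ne_of_not_subset hsub⟩
end

section
/- Equivalently, a finite set S ⊂ ℝ^3 with at most n elements is uniquely determined by its moment tensors Σ_{r∈S} r^{⊗k} for k = 0, 1, ..., 2n. -/
/-!
Every polynomial of degree at most `2n` has the same sum over `S` and over `S'`, since its
monomials are entries of the moment tensors. The polynomial `x ↦ ∏_{s ∈ S'} |x - s|²` has
degree `2 |S'| ≤ 2n`, is nonnegative and vanishes exactly on `S'`; its sum over `S'` is `0`,
so its sum over `S` is `0` too, which forces `S ⊆ S'`. By symmetry `S = S'`.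
-/

open MvPolynomial Finset

variable {ι R : Type*}

def momentTensor [CommSemiring R] (S : Finset (ι → R)) (k : ℕ) (idx : Fin k → ι) : R :=
  ∑ r ∈ S, ∏ j, r (idx j)

theorem Finsupp.prod_map_toList_toMultiset {M : Type*} [CommMonoid M] (d : ι →₀ ℕ)
    (f : ι → M) : (d.toMultiset.toList.map f).prod = d.prod fun i e => f i ^ e := by
  rw [← Multiset.prod_coe, ← Multiset.map_coe, Multiset.coe_toList, Finsupp.toMultiset_map,
    Finsupp.prod_toMultiset,
    Finsupp.prod_mapDomain_index (fun _ => pow_zero _) (fun _ _ _ => pow_add _ _ _)]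

theorem sum_eval_eq_of_momentTensor_eq [CommSemiring R] {S S' : Finset (ι → R)} {m : ℕ}
    (hmom : ∀ k ≤ m, momentTensor S k = momentTensor S' k)
    {P : MvPolynomial ι R} (hP : P.totalDegree ≤ m) :
    ∑ r ∈ S, eval r P = ∑ r ∈ S', eval r P := by
  have hmonomial : ∀ d ∈ P.support,
      ∑ r ∈ S, (d.prod fun i e => r i ^ e) = ∑ r ∈ S', d.prod fun i e => r i ^ e := by
    intro d hd
    simp only [← Finsupp.prod_map_toList_toMultiset]
    -- `l` lists each index `i` exactly `d i` times.
    set l := d.toMultiset.toList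
    have hl : l.length ≤ m := by
      rw [Multiset.length_toList, Finsupp.card_toMultiset]
      exact (le_totalDegree hd).trans hP
    simpa only [momentTensor, Fin.prod_univ_fun_getElem]
      using congrFun (hmom l.length hl) fun j : Fin l.length => l[j.1]
  conv_lhs => rw [P.as_sum]
  conv_rhs => rw [P.as_sum]
  simp only [map_sum, eval_monomial]
  rw [sum_comm, sum_comm (s := S')]
  refine sum_congr rfl fun d hd => ?_
  rw [← mul_sum, ← mul_sum, hmonomial d hd]

variable [Fintype ι]

noncomputable def prodSqDist (T : Finset (ι → ℝ)) : MvPolynomial ι ℝ :=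
  ∏ s ∈ T, ∑ i, (X i - C (s i)) ^ 2

theorem totalDegree_prodSqDist_le (T : Finset (ι → ℝ)) :
    (prodSqDist T).totalDegree ≤ 2 * #T := by
  refine (totalDegree_finsetProd _ _).trans ?_
  rw [mul_comm, ← smul_eq_mul]
  refine sum_le_card_nsmul _ _ 2 fun s _ => ?_
  refine (totalDegree_finsetSum _ _).trans (Finset.sup_le fun i _ => ?_)
  refine (totalDegree_pow _ _).trans ?_
  have := (totalDegree_sub_C_le (X i : MvPolynomial ι ℝ) (s i)).trans (totalDegree_X i).le
  omega

theorem eval_prodSqDist (T : Finset (ι → ℝ)) (r : ι → ℝ) :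
    eval r (prodSqDist T) = ∏ s ∈ T, ∑ i, (r i - s i) ^ 2 := by
  simp [prodSqDist]

theorem eval_prodSqDist_nonneg (T : Finset (ι → ℝ)) (r : ι → ℝ) :
    0 ≤ eval r (prodSqDist T) := by
  rw [eval_prodSqDist]
  exact prod_nonneg fun s _ => sum_nonneg fun i _ => sq_nonneg _

theorem eval_prodSqDist_eq_zero_iff {T : Finset (ι → ℝ)} {r : ι → ℝ} :
    eval r (prodSqDist T) = 0 ↔ r ∈ T := by
  have hdist : ∀ s : ι → ℝ, ∑ i, (r i - s i) ^ 2 = 0 ↔ r = s := by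
    intro s
    rw [sum_eq_zero_iff_of_nonneg fun i _ => sq_nonneg _, funext_iff]
    simp [sub_eq_zero]
  simp [eval_prodSqDist, prod_eq_zero_iff, hdist]

theorem subset_of_momentTensor_eq {S S' : Finset (ι → ℝ)} {n : ℕ} (hS' : #S' ≤ n)
    (hmom : ∀ k ≤ 2 * n, momentTensor S k = momentTensor S' k) : S ⊆ S' := by
  have hdeg : (prodSqDist S').totalDegree ≤ 2 * n :=
    (totalDegree_prodSqDist_le S').trans (by omega)
  have hsum := sum_eval_eq_of_momentTensor_eq hmom hdeg
  rw [sum_eq_zero fun r hr => eval_prodSqDist_eq_zero_iff.2 hr,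
    sum_eq_zero_iff_of_nonneg fun r _ => eval_prodSqDist_nonneg S' r] at hsum
  exact fun r hr => eval_prodSqDist_eq_zero_iff.1 (hsum r hr)

/-- A finite set `S ⊂ ℝ³` with at most `n` elements is determined by its moment tensors
`∑_{r ∈ S} r^{⊗k}` for `k = 0, 1, ..., 2n`.  The `(i₁,...,i_k)` entry of the `k`-th moment
tensor is `∑_{r ∈ S} ∏_j r_{i_j}`. -/
theorem moments_determine_set (n : ℕ) (S S' : Finset (Fin 3 → ℝ))
    (hS : S.card ≤ n) (hS' : S'.card ≤ n)
    (hmom : ∀ k : ℕ, k ≤ 2 * n → ∀ idx : Fin k → Fin 3,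
      ∑ r ∈ S, ∏ j : Fin k, r (idx j) = ∑ r ∈ S', ∏ j : Fin k, r (idx j)) :
    S = S' := by
  have hmom' : ∀ k ≤ 2 * n, momentTensor S k = momentTensor S' k :=
    fun k hk => funext (hmom k hk)
  exact Subset.antisymm (subset_of_momentTensor_eq hS' hmom')
    (subset_of_momentTensor_eq hS fun k hk => (hmom' k hk).symm)
end

section
/- Let G be a compact group acting orthogonally on a finite-dimensional Euclidean vector space V, and let v, w ∈ V be points in distinct G-orbits. Then there exists a G-invariant polynomial P : V → ℝ with P(v) ≠ P(w). -/
open MeasureTheory Finset Filter Topology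
open scoped RealInnerProductSpace

/-! Average the kernel `(R - ‖x - y‖²) ^ N` over the orbit `y = ρ g v` against Haar measure. The
result is invariant, and since the orbit lies on a sphere, the kernel is a polynomial in `x` with
coefficients continuous in `g`, so the average is a polynomial. For `R` large the kernel is
nonnegative at `x = v, w`. At `x = w` it stays below some `c < R` (the orbit is compact and misses
`w`), while at `x = v` it exceeds `c` near `g = 1`; raising to a high power `N` makes the average
at `v` larger than at `w`. -/

section PolynomialFunctions

variable {ι : Type*}

noncomputable def mvPolynomialFunctions (ι : Type*) : Subalgebra ℝ (EuclideanSpace ℝ ι → ℝ) :=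
  (MvPolynomial.aeval fun i (x : EuclideanSpace ℝ ι) => x i).range

theorem mem_mvPolynomialFunctions {f : EuclideanSpace ℝ ι → ℝ} :
    f ∈ mvPolynomialFunctions ι ↔
      ∃ P : MvPolynomial ι ℝ, ∀ x : EuclideanSpace ℝ ι, MvPolynomial.eval x P = f x := by
  have eval_eq (P : MvPolynomial ι ℝ) (x : EuclideanSpace ℝ ι) :
      MvPolynomial.aeval (fun i (x : EuclideanSpace ℝ ι) => x i) P x = MvPolynomial.eval x P :=
    MvPolynomial.comp_aeval_apply _ (Pi.evalAlgHom ℝ (fun _ => ℝ) x) P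
  refine exists_congr fun P => ⟨fun h x => ?_, fun h => funext fun x => ?_⟩
  · rw [← h]
    exact (eval_eq P x).symm
  · exact (eval_eq P x).trans (h x)

theorem coord_mem_mvPolynomialFunctions (i : ι) :
    (fun x : EuclideanSpace ℝ ι => x i) ∈ mvPolynomialFunctions ι :=
  ⟨MvPolynomial.X i, MvPolynomial.aeval_X _ _⟩

theorem norm_sq_mem_mvPolynomialFunctions [Fintype ι] :
    (fun x : EuclideanSpace ℝ ι => ‖x‖ ^ 2) ∈ mvPolynomialFunctions ι := by
  have : (fun x : EuclideanSpace ℝ ι => ‖x‖ ^ 2) = ∑ i, (fun x => x i) ^ 2 := by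
    funext x
    simp [EuclideanSpace.real_norm_sq_eq]
  rw [this]
  exact sum_mem fun i _ => pow_mem (coord_mem_mvPolynomialFunctions i) 2

end PolynomialFunctions

theorem Continuous.integrable_of_compactSpace {X : Type*} [TopologicalSpace X] [CompactSpace X]
    [MeasurableSpace X] [OpensMeasurableSpace X] {μ : Measure X} [IsFiniteMeasureOnCompacts μ]
    {f : X → ℝ} (hf : Continuous f) : Integrable f μ :=
  hf.integrable_of_hasCompactSupport (HasCompactSupport.of_compactSpace f)

theorem integral_mem_of_eq_sum {X G α : Type*} [MeasurableSpace G] {μ : Measure G}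
    {M : Submodule ℝ (X → ℝ)} {f : G → X → ℝ} {s : Finset α} {c : α → G → ℝ}
    {φ : α → X → ℝ} (hc : ∀ i ∈ s, Integrable (c i) μ) (hφ : ∀ i ∈ s, φ i ∈ M)
    (hf : ∀ g x, f g x = ∑ i ∈ s, c i g * φ i x) :
    (fun x => ∫ g, f g x ∂μ) ∈ M := by
  have : (fun x => ∫ g, f g x ∂μ) = ∑ i ∈ s, (∫ g, c i g ∂μ) • φ i := by
    funext x
    simp only [hf, Finset.sum_apply, Pi.smul_apply, smul_eq_mul]
    rw [integral_finsetSum s fun i hi => (hc i hi).mul_const _]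
    simp only [integral_mul_const]
  rw [this]
  exact M.sum_mem fun i hi => M.smul_mem _ (hφ i hi)

theorem exists_pow_mul_lt_pow_mul {a b d : ℝ} (c : ℝ) (ha : 0 ≤ a) (hab : a < b) (hd : 0 < d) :
    ∃ N : ℕ, a ^ N * c < b ^ N * d := by
  have hb : 0 < b := ha.trans_lt hab
  have hlim : Tendsto (fun N : ℕ => (a / b) ^ N * c) atTop (𝓝 0) := by
    simpa using (tendsto_pow_atTop_nhds_zero_of_lt_one (div_nonneg ha hb.le)
      ((div_lt_one hb).2 hab)).mul_const c
  obtain ⟨N, hN⟩ := (hlim.eventually (gt_mem_nhds hd)).exists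
  refine ⟨N, ?_⟩
  calc a ^ N * c = (a / b) ^ N * c * b ^ N := by rw [div_pow]; field_simp
    _ < d * b ^ N := mul_lt_mul_of_pos_right hN (pow_pos hb N)
    _ = b ^ N * d := mul_comm _ _

theorem exists_integral_pow_lt_integral_pow {X : Type*} [TopologicalSpace X] [CompactSpace X]
    [MeasurableSpace X] [OpensMeasurableSpace X] (μ : Measure X) [IsFiniteMeasure μ]
    [μ.IsOpenPosMeasure] {φ ψ : X → ℝ} (hφ : Continuous φ) (hψ : Continuous ψ) (hφ0 : 0 ≤ φ)
    (hψ0 : 0 ≤ ψ) {x₀ : X} (hlt : ∀ x, φ x < ψ x₀) :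
    ∃ N : ℕ, ∫ x, φ x ^ N ∂μ < ∫ x, ψ x ^ N ∂μ := by
  obtain ⟨x₁, -, hx₁⟩ := isCompact_univ.exists_isMaxOn ⟨x₀, Set.mem_univ _⟩ hφ.continuousOn
  obtain ⟨b, hb, hbψ⟩ := exists_between (hlt x₁)
  set U := {x | b < ψ x}
  have hUopen : IsOpen U := isOpen_lt continuous_const hψ
  have hU : 0 < μ.real U :=
    ENNReal.toReal_pos (hUopen.measure_pos μ ⟨x₀, hbψ⟩).ne' (measure_ne_top μ U)
  obtain ⟨N, hN⟩ := exists_pow_mul_lt_pow_mul (μ.real Set.univ) (hφ0 x₁) hb hU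
  have hψN : Integrable (fun x => ψ x ^ N) μ := (hψ.pow N).integrable_of_compactSpace
  refine ⟨N, ?_⟩
  calc ∫ x, φ x ^ N ∂μ ≤ ∫ _, φ x₁ ^ N ∂μ :=
        integral_mono (hφ.pow N).integrable_of_compactSpace (integrable_const _)
          fun x => pow_le_pow_left₀ (hφ0 x) (hx₁ (Set.mem_univ x)) N
    _ = φ x₁ ^ N * μ.real Set.univ := by rw [integral_const, smul_eq_mul, mul_comm]
    _ < b ^ N * μ.real U := hN
    _ ≤ ∫ x in U, ψ x ^ N ∂μ := by
        rw [mul_comm]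
        exact setIntegral_ge_of_const_le hUopen.measurableSet (measure_ne_top μ U)
          (fun x hx => pow_le_pow_left₀ ((hφ0 x₁).trans hb.le) (le_of_lt hx) N)
          hψN.integrableOn
    _ ≤ ∫ x, ψ x ^ N ∂μ :=
        setIntegral_le_integral hψN (Eventually.of_forall fun x => pow_nonneg (hψ0 x) N)

theorem integral_comp_norm_sub_orbit {G E : Type*} [Group G] [MeasurableSpace G]
    [MeasurableMul G] (μ : Measure G) [μ.IsMulLeftInvariant] [NormedAddCommGroup E]
    [NormedSpace ℝ E] (ρ : G →* (E ≃ₗᵢ[ℝ] E)) (f : ℝ → ℝ) (h : G) (x v : E) :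
    ∫ g, f ‖ρ h x - ρ g v‖ ∂μ = ∫ g, f ‖x - ρ g v‖ ∂μ := by
  rw [← integral_mul_left_eq_self (fun g => f ‖x - ρ g v‖) h⁻¹]
  congr with g
  have : ρ g v = ρ h (ρ (h⁻¹ * g) v) := by
    show ρ g v = (ρ h * ρ (h⁻¹ * g)) v
    rw [← map_mul, mul_inv_cancel_left]
  rw [this, ← map_sub, LinearIsometryEquiv.norm_map]

section Averaging

variable {ι G : Type*} [Fintype ι] [TopologicalSpace G] [CompactSpace G] [MeasurableSpace G]
  [OpensMeasurableSpace G] (μ : Measure G) [IsFiniteMeasure μ]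

theorem integral_inner_pow_mem_mvPolynomialFunctions {y : G → EuclideanSpace ℝ ι}
    (hy : Continuous y) (k : ℕ) :
    (fun x => ∫ g, ⟪x, y g⟫ ^ k ∂μ) ∈ mvPolynomialFunctions ι := by
  refine integral_mem_of_eq_sum (M := Subalgebra.toSubmodule (mvPolynomialFunctions ι))
    (s := univ) (c := fun p g => ∏ j, y g (p j))
    (φ := fun p : Fin k → ι => ∏ j, fun x : EuclideanSpace ℝ ι => x (p j))
    (fun p _ => (by fun_prop : Continuous _).integrable_of_compactSpace)
    (fun p _ => Subalgebra.prod_mem _ fun j _ => coord_mem_mvPolynomialFunctions (p j))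
    fun g x => ?_
  simp only [EuclideanSpace.inner_eq_star_dotProduct, dotProduct, Fintype.sum_pow, prod_apply,
    ← prod_mul_distrib]
  simp [mul_comm]

theorem integral_pow_add_inner_mem_mvPolynomialFunctions {a : EuclideanSpace ℝ ι → ℝ}
    (ha : a ∈ mvPolynomialFunctions ι) {y : G → EuclideanSpace ℝ ι} (hy : Continuous y)
    (N : ℕ) : (fun x => ∫ g, (a x + ⟪x, y g⟫) ^ N ∂μ) ∈ mvPolynomialFunctions ι := by
  have hint (x : EuclideanSpace ℝ ι) (k : ℕ) : Integrable (fun g => ⟪x, y g⟫ ^ k) μ :=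
    (by fun_prop : Continuous _).integrable_of_compactSpace
  have hbinomial : (fun x => ∫ g, (a x + ⟪x, y g⟫) ^ N ∂μ) = ∑ k ∈ range (N + 1),
      (N.choose k : ℝ) • (a ^ k * fun x => ∫ g, ⟪x, y g⟫ ^ (N - k) ∂μ) := by
    funext x
    simp only [add_pow, Finset.sum_apply, Pi.smul_apply, Pi.mul_apply, Pi.pow_apply, smul_eq_mul]
    rw [integral_finsetSum _ fun k _ => ((hint x _).const_mul _).mul_const _]
    refine sum_congr rfl fun k _ => ?_
    rw [integral_mul_const, integral_const_mul]
    ring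
  rw [hbinomial]
  exact sum_mem fun k _ => Subalgebra.smul_mem _
    (mul_mem (pow_mem ha k) (integral_inner_pow_mem_mvPolynomialFunctions μ hy _)) _

theorem integral_pow_sub_norm_sub_sq_mem_mvPolynomialFunctions {y : G → EuclideanSpace ℝ ι}
    (hy : Continuous y) {r : ℝ} (hr : ∀ g, ‖y g‖ = r) (R : ℝ) (N : ℕ) :
    (fun x => ∫ g, (R - ‖x - y g‖ ^ 2) ^ N ∂μ) ∈ mvPolynomialFunctions ι := by
  have hexpand (x : EuclideanSpace ℝ ι) (g : G) :
      R - ‖x - y g‖ ^ 2 = (R - r ^ 2 - ‖x‖ ^ 2) + ⟪x, (2 : ℝ) • y g⟫ := by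
    rw [norm_sub_sq_real, hr, real_inner_smul_right]
    ring
  simp_rw [hexpand]
  exact integral_pow_add_inner_mem_mvPolynomialFunctions μ
    (sub_mem (algebraMap_mem _ (R - r ^ 2)) norm_sq_mem_mvPolynomialFunctions)
    (hy.const_smul (2 : ℝ)) N

end Averaging

/-- If a compact group `G` acts orthogonally (by linear isometries, continuously) on a
finite-dimensional Euclidean space, and `v, w` lie in distinct `G`-orbits, then there is a
`G`-invariant polynomial `P` with `P(v) ≠ P(w)`. -/
theorem exists_invariant_polynomial_separating_orbits
    {G : Type*} [Group G] [TopologicalSpace G] [IsTopologicalGroup G] [CompactSpace G]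
    (n : ℕ) (ρ : G →* (EuclideanSpace ℝ (Fin n) ≃ₗᵢ[ℝ] EuclideanSpace ℝ (Fin n)))
    (hcont : Continuous fun p : G × EuclideanSpace ℝ (Fin n) => ρ p.1 p.2)
    (v w : EuclideanSpace ℝ (Fin n))
    (horb : ∀ g : G, ρ g v ≠ w) :
    ∃ P : MvPolynomial (Fin n) ℝ,
      (∀ (g : G) (x : EuclideanSpace ℝ (Fin n)),
        MvPolynomial.eval (ρ g x) P = MvPolynomial.eval x P) ∧
      MvPolynomial.eval v P ≠ MvPolynomial.eval w P := by
  borelize G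
  have horbit : Continuous fun g => ρ g v := hcont.comp (Continuous.prodMk_left v)
  set R := (2 * ‖v‖ + ‖w‖) ^ 2
  have hR (x : EuclideanSpace ℝ (Fin n)) (hx : ‖x‖ ≤ ‖v‖ + ‖w‖) (g : G) :
      0 ≤ R - ‖x - ρ g v‖ ^ 2 := by
    have : ‖x - ρ g v‖ ≤ 2 * ‖v‖ + ‖w‖ := calc
      ‖x - ρ g v‖ ≤ ‖x‖ + ‖ρ g v‖ := norm_sub_le _ _
      _ ≤ 2 * ‖v‖ + ‖w‖ := by rw [LinearIsometryEquiv.norm_map]; linarith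
    exact sub_nonneg.2 (pow_le_pow_left₀ (norm_nonneg _) this 2)
  obtain ⟨N, hN⟩ := exists_integral_pow_lt_integral_pow (Measure.haar : Measure G)
    (φ := fun g => R - ‖w - ρ g v‖ ^ 2) (ψ := fun g => R - ‖v - ρ g v‖ ^ 2)
    (by fun_prop) (by fun_prop) (hR w (by simp)) (hR v (by simp)) (x₀ := 1)
    fun g => by simpa using pow_pos (norm_sub_pos_iff.2 (horb g).symm) 2
  obtain ⟨P, hP⟩ := mem_mvPolynomialFunctions.1
    (integral_pow_sub_norm_sub_sq_mem_mvPolynomialFunctions Measure.haar horbit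
      (fun g => (ρ g).norm_map v) R N)
  refine ⟨P, fun g x => ?_, ?_⟩
  · rw [hP, hP]
    exact integral_comp_norm_sub_orbit Measure.haar ρ (fun t => (R - t ^ 2) ^ N) g x v
  · rw [hP, hP]
    exact hN.ne'
end
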